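/- Let M > 1 and n be real numbers, let q satisfy 0 < q ≤ min{n, 2M - n}, and set k = (n - q)/2, so that [k, n-k] ⊆ [0, M]. Then ∫_{k}^{n-k} [C(M-1, s)·C(M-2, n-s-1) − C(M-1, s-1)·C(M-2, n-s)] ds = ∫_{k-1}^{k} ((n - 2s - 1)/(M - 1))·C(M-1, s)·C(M-1, n-s-1) ds. -/

import Mathlib

open Real MeasureTheory Set

/-- Generalized binomial coefficient `C(M,s) = Γ(M+1)/(Γ(s+1)·Γ(M-s+1))`. -/
noncomputable def genBinom (M s : ℝ) : ℝ :=
  Real.Gamma (M + 1) / (Real.Gamma (s + 1) * Real.Gamma (M - s + 1))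

/-!
Write `P s = C(M-1, s)·C(M-2, n-s-1)`. The left integrand is `P s - P (s-1)`, so the left integral
telescopes to `∫_{n-k-1}^{n-k} P - ∫_{k-1}^{k} P`, and the reflection `s ↦ n-1-s` moves the first
piece onto `[k-1, k]`. There `P (n-1-s) - P s` is the right integrand, by the absorption identity
`C(N-1, t) = C(N, t)·(N-t)/N` applied to both factors with index `N = M-1`.
-/

lemma continuous_inv_Gamma : Continuous fun x : ℝ => (Gamma x)⁻¹ := by
  have h (x : ℝ) : (Gamma x)⁻¹ = (Complex.Gamma x)⁻¹.re := by
    rw [Complex.Gamma_ofReal, ← Complex.ofReal_inv, Complex.ofReal_re]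
  simp only [h]
  exact Complex.continuous_re.comp
    (Complex.differentiable_one_div_Gamma.continuous.comp Complex.continuous_ofReal)

lemma continuous_genBinom (M : ℝ) : Continuous (genBinom M) := by
  have h (s : ℝ) : genBinom M s = Gamma (M + 1) * (Gamma (s + 1))⁻¹ * (Gamma (M - s + 1))⁻¹ := by
    rw [genBinom, div_eq_mul_inv, mul_inv, ← mul_assoc]
  simp only [funext h]
  exact (continuous_const.mul (continuous_inv_Gamma.comp (continuous_add_const 1))).mul
    (continuous_inv_Gamma.comp ((continuous_sub_left M).add continuous_const))

lemma genBinom_sub_one (N t : ℝ) (hN : N ≠ 0) :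
    genBinom (N - 1) t = genBinom N t * (N - t) / N := by
  rcases eq_or_ne (N - t) 0 with ht | ht
  · simp [genBinom, show N - 1 - t + 1 = N - t by ring, ht]
  rw [genBinom, genBinom, sub_add_cancel, show N - 1 - t + 1 = N - t by ring,
    Gamma_add_one hN, Gamma_add_one ht]
  rcases eq_or_ne (Gamma (t + 1)) 0 with hb | hb
  · simp [hb]
  rcases eq_or_ne (Gamma (N - t)) 0 with hc | hc
  · simp [hc]
  field_simp

lemma genBinom_reflect_sub (N n s : ℝ) (hN : N ≠ 0) :
    genBinom N (n - 1 - s) * genBinom (N - 1) s - genBinom N s * genBinom (N - 1) (n - s - 1) =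
      (n - 2 * s - 1) / N * genBinom N s * genBinom N (n - s - 1) := by
  rw [genBinom_sub_one N s hN, genBinom_sub_one N _ hN, show n - 1 - s = n - s - 1 by ring]
  field_simp
  ring

lemma intervalIntegral_sub_comp_sub_right {f : ℝ → ℝ} (hf : Continuous f) (a b h : ℝ) :
    ∫ s in a..b, (f s - f (s - h)) = (∫ s in (b - h)..b, f s) - ∫ s in (a - h)..a, f s := by
  have hi (c d : ℝ) : IntervalIntegrable f volume c d := hf.intervalIntegrable c d
  have hshift : IntervalIntegrable (fun s => f (s - h)) volume a b :=
    (hf.comp (continuous_sub_right h)).intervalIntegrable a b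
  rw [intervalIntegral.integral_sub (hi a b) hshift, intervalIntegral.integral_comp_sub_right f h]
  linarith [intervalIntegral.integral_add_adjacent_intervals (hi (a - h) a) (hi a b),
    intervalIntegral.integral_add_adjacent_intervals (hi (a - h) (b - h)) (hi (b - h) b)]

theorem genBinom_integral_identity_general
    (M n q : ℝ) (hM : 1 < M) (hq₂ : q ≤ min n (2 * M - n))
    (k : ℝ) (hk : k = (n - q) / 2) :
    Set.Icc k (n - k) ⊆ Set.Icc 0 M ∧
    (∫ s in k..(n - k),
        (genBinom (M - 1) s * genBinom (M - 2) (n - s - 1) -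
          genBinom (M - 1) (s - 1) * genBinom (M - 2) (n - s))) =
      ∫ s in (k - 1)..k,
        (n - 2 * s - 1) / (M - 1) * genBinom (M - 1) s * genBinom (M - 1) (n - s - 1) := by
  obtain ⟨hqn, hqM⟩ := le_min_iff.mp hq₂
  refine ⟨Icc_subset_Icc (by linarith) (by linarith), ?_⟩
  set P : ℝ → ℝ := fun s => genBinom (M - 1) s * genBinom (M - 2) (n - s - 1)
  have hP : Continuous P := by
    have := continuous_genBinom (M - 1)
    have := continuous_genBinom (M - 2)
    fun_prop
  have hM2 : M - 2 = M - 1 - 1 := by ring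
  calc _ = ∫ s in k..(n - k), (P s - P (s - 1)) := by
        refine intervalIntegral.integral_congr fun s _ => ?_
        simp only [P, show n - (s - 1) - 1 = n - s by ring]
    _ = (∫ s in (k - 1)..k, P (n - 1 - s)) - ∫ s in (k - 1)..k, P s := by
        rw [intervalIntegral_sub_comp_sub_right hP, intervalIntegral.integral_comp_sub_left P (n - 1),
          show n - 1 - (k - 1) = n - k by ring, show n - 1 - k = n - k - 1 by ring]
    _ = ∫ s in (k - 1)..k, (P (n - 1 - s) - P s) :=
        (intervalIntegral.integral_sub ((hP.comp (continuous_sub_left _)).intervalIntegrable _ _)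
          (hP.intervalIntegrable _ _)).symm
    _ = _ := by
        refine intervalIntegral.integral_congr fun s _ => ?_
        simp only [P, hM2, show n - (n - 1 - s) - 1 = s by ring]
        exact genBinom_reflect_sub _ n s (by linarith)

theorem genBinom_integral_identity
    (M n q : ℝ) (hM : 1 < M) (hq₁ : 0 < q) (hq₂ : q ≤ min n (2 * M - n))
    (k : ℝ) (hk : k = (n - q) / 2) :
    Set.Icc k (n - k) ⊆ Set.Icc 0 M ∧
    (∫ s in k..(n - k),
        (genBinom (M - 1) s * genBinom (M - 2) (n - s - 1) -
          genBinom (M - 1) (s - 1) * genBinom (M - 2) (n - s))) =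
      ∫ s in (k - 1)..k,
        (n - 2 * s - 1) / (M - 1) * genBinom (M - 1) s * genBinom (M - 1) (n - s - 1) :=
  genBinom_integral_identity_general M n q hM hq₂ k hk
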